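/- arXiv:2211.14967 — 2 statements merged into one kernel-verified Lean document; each statement's English description precedes it below -/
import Mathlib

section
/- Let R be a commutative noetherian Poisson algebra over a field of characteristic 0. If P is a Poisson ideal that is Poisson-prime, then P is a prime ideal of R. Conversely, prime Poisson ideals are Poisson-prime. Hence in this setting the Poisson-prime ideals are exactly the prime ideals that are Poisson ideals. -/
/-- An ideal `I` of a commutative algebra with a bracket `B` is a Poisson ideal if
`{R, I} ⊆ I`. -/
def IsPoissonIdeal {k R : Type*} [CommSemiring k] [CommRing R] [Algebra k R]
    (B : R →ₗ[k] R →ₗ[k] R) (I : Ideal R) : Prop :=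
  ∀ r a : R, a ∈ I → B r a ∈ I

variable {k R : Type*} [Field k] [CommRing R] [Algebra k R]

/-- A proper Poisson ideal `P` is Poisson-prime if `IJ ⊆ P` implies `I ⊆ P` or `J ⊆ P` for
all Poisson ideals `I`, `J`. -/
def IsPoissonPrime {k R : Type*} [CommSemiring k] [CommRing R] [Algebra k R]
    (B : R →ₗ[k] R →ₗ[k] R) (P : Ideal R) : Prop :=
  P ≠ ⊤ ∧ IsPoissonIdeal B P ∧
    ∀ I J : Ideal R, IsPoissonIdeal B I → IsPoissonIdeal B J →
      I * J ≤ P → I ≤ P ∨ J ≤ P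

/-!
In characteristic zero a derivation that preserves an ideal `I` preserves `√I`, and then, by prime
avoidance, each of the finitely many minimal primes `Q₁, …, Qₙ` over `I`. For a Poisson-prime `P`
the `Qᵢ` are therefore Poisson ideals, and some power of `∏ Qᵢ ≤ √P` lies in `P`; Poisson-primeness
gives first `∏ Qᵢ ≤ P` and then `Qᵢ ≤ P` for some `i`, so `P = Qᵢ` is prime.
-/
theorem Ideal.mem_of_nsmul_mem {A : Type*} [CommRing A] [Algebra ℚ A] {I : Ideal A} {n : ℕ}
    (hn : n ≠ 0) {x : A} (h : n • x ∈ I) : x ∈ I := by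
  have hx : x = algebraMap ℚ A (n : ℚ)⁻¹ * (n • x) := by
    rw [← Algebra.smul_def, ← Nat.cast_smul_eq_nsmul ℚ, smul_smul,
      inv_mul_cancel₀ (Nat.cast_ne_zero.mpr hn), one_smul]
  rw [hx]
  exact I.mul_mem_left _ h

theorem Ideal.prod_le_radical_of_minimalPrimes_subset {A : Type*} [CommSemiring A]
    {I : Ideal A} {s : Finset (Ideal A)} (hs : I.minimalPrimes ⊆ s) :
    ∏ Q ∈ s, Q ≤ I.radical := by
  rw [← Ideal.sInf_minimalPrimes]
  exact le_sInf fun Q hQ => Ideal.prod_le_inf.trans (Finset.inf_le (hs hQ))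

namespace Derivation

variable {S A : Type*} [CommSemiring S] [CommRing A] [Algebra S A] [Algebra ℚ A]
  (D : Derivation S A A) {I : Ideal A}

theorem mul_mem_radical_of_pow_mul_mem (hI : ∀ x ∈ I, D x ∈ I) {a : A} (m : ℕ) :
    ∀ {b : A}, a ^ m * b ∈ I → b * D a ∈ I.radical := by
  induction m with
  | zero =>
    intro b hb
    rw [pow_zero, one_mul] at hb
    exact I.le_radical (I.mul_mem_right _ hb)
  | succ m ih =>
    intro b hb
    -- differentiating `a ^ (m + 1) * b` and multiplying by `b` trades a factor `a` for `D a * b`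
    have hexpand : b * D (a ^ (m + 1) * b) =
        (m + 1) • (a ^ m * (D a * b ^ 2)) + a ^ (m + 1) * b * D b := by
      rw [D.leibniz, D.leibniz_pow, Nat.add_sub_cancel]
      simp only [smul_eq_mul, nsmul_eq_mul]
      ring
    have hstep : a ^ m * (D a * b ^ 2) ∈ I := by
      refine I.mem_of_nsmul_mem m.succ_ne_zero ?_
      have := I.sub_mem (I.mul_mem_left b (hI _ hb)) (I.mul_mem_right (D b) hb)
      rwa [hexpand, add_sub_cancel_right] at this
    have hsq : (b * D a) ^ 2 ∈ I.radical := by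
      have := ih hstep
      rwa [show D a * b ^ 2 * D a = (b * D a) ^ 2 by ring] at this
    exact I.radical_isRadical ⟨2, hsq⟩

theorem map_mem_radical (hI : ∀ x ∈ I, D x ∈ I) {a : A} (ha : a ∈ I.radical) :
    D a ∈ I.radical := by
  obtain ⟨m, hm⟩ := ha
  simpa using D.mul_mem_radical_of_pow_mul_mem hI m (b := 1) (by simpa using hm)

theorem map_mem_of_mem_minimalPrimes [IsNoetherianRing A] (hI : ∀ x ∈ I, D x ∈ I)
    {Q : Ideal A} (hQ : Q ∈ I.minimalPrimes) {a : A} (ha : a ∈ Q) : D a ∈ Q := by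
  classical
  have hQprime : Q.IsPrime := hQ.1.1
  set F := (I.finite_minimalPrimes_of_isNoetherianRing A).toFinset
  have hQF : Q ∈ F := by simpa [F] using hQ
  obtain ⟨b, hb, hbQ⟩ : ∃ b ∈ ∏ Q' ∈ F.erase Q, Q', b ∉ Q := by
    refine SetLike.not_le_iff_exists.mp fun hle => ?_
    obtain ⟨Q', hQ'F, hQ'Q⟩ := hQprime.prod_le.mp hle
    obtain ⟨hne, hQ'F⟩ := Finset.mem_erase.mp hQ'F
    have hQ' : Q' ∈ I.minimalPrimes := by simpa [F] using hQ'F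
    exact hne (le_antisymm hQ'Q (hQ.2 hQ'.1 hQ'Q))
  have hab : a * b ∈ I.radical := by
    refine Ideal.prod_le_radical_of_minimalPrimes_subset (s := F) (by simp [F]) ?_
    rw [← Finset.mul_prod_erase F (fun Q => Q) hQF]
    exact Ideal.mul_mem_mul ha hb
  have hDab : a * D b + b * D a ∈ Q := by
    simpa [D.leibniz] using (hQprime.radical_le_iff.mpr hQ.1.2) (D.map_mem_radical hI hab)
  have hbDa : b * D a ∈ Q := by
    simpa using Q.sub_mem hDab (Q.mul_mem_right (D b) ha)
  exact (hQprime.mem_or_mem hbDa).resolve_left hbQ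

end Derivation

section Poisson

variable {k R : Type*} [CommSemiring k] [CommRing R] [Algebra k R] {B : R →ₗ[k] R →ₗ[k] R}

theorem isPoissonIdeal_top : IsPoissonIdeal B ⊤ :=
  fun _ _ _ => Submodule.mem_top

theorem IsPoissonIdeal.mul (hleib : ∀ a x y : R, B a (x * y) = B a x * y + x * B a y)
    {I J : Ideal R} (hI : IsPoissonIdeal B I) (hJ : IsPoissonIdeal B J) :
    IsPoissonIdeal B (I * J) := by
  intro r a ha
  refine Submodule.mul_induction_on ha (fun i hi j hj => ?_) (fun x y hx hy => ?_)
  · rw [hleib]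
    exact add_mem (Ideal.mul_mem_mul (hI r i hi) hj) (Ideal.mul_mem_mul hi (hJ r j hj))
  · rw [map_add]
    exact add_mem hx hy

theorem IsPoissonIdeal.pow (hleib : ∀ a x y : R, B a (x * y) = B a x * y + x * B a y)
    {I : Ideal R} (hI : IsPoissonIdeal B I) (n : ℕ) : IsPoissonIdeal B (I ^ n) := by
  induction n with
  | zero => rw [pow_zero, Ideal.one_eq_top]; exact isPoissonIdeal_top
  | succ n ih => rw [pow_succ]; exact ih.mul hleib hI

theorem IsPoissonIdeal.prod (hleib : ∀ a x y : R, B a (x * y) = B a x * y + x * B a y)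
    {ι : Type*} {s : Finset ι} {f : ι → Ideal R} (hf : ∀ i ∈ s, IsPoissonIdeal B (f i)) :
    IsPoissonIdeal B (∏ i ∈ s, f i) :=
  Finset.prod_induction f _ (fun _ _ hI hJ => hI.mul hleib hJ)
    (Ideal.one_eq_top (R := R) ▸ isPoissonIdeal_top) hf

theorem IsPoissonIdeal.of_mem_minimalPrimes [Algebra ℚ R] [IsNoetherianRing R]
    (hleib : ∀ a x y : R, B a (x * y) = B a x * y + x * B a y) {I Q : Ideal R}
    (hI : IsPoissonIdeal B I) (hQ : Q ∈ I.minimalPrimes) : IsPoissonIdeal B Q := by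
  intro r a ha
  let D : Derivation k R R := Derivation.mk' (B r) fun x y => by
    rw [hleib, smul_eq_mul, smul_eq_mul, add_comm, mul_comm y]
  exact D.map_mem_of_mem_minimalPrimes (hI r) hQ ha

theorem Ideal.IsPrime.isPoissonPrime {P : Ideal R} (hP : P.IsPrime) (hB : IsPoissonIdeal B P) :
    IsPoissonPrime B P :=
  ⟨hP.ne_top, hB, fun _ _ _ _ h => hP.mul_le.mp h⟩

namespace IsPoissonPrime

variable {P : Ideal R} (hP : IsPoissonPrime B P)
  (hleib : ∀ a x y : R, B a (x * y) = B a x * y + x * B a y)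
include hP hleib

theorem le_of_pow_le {I : Ideal R} (hI : IsPoissonIdeal B I) {n : ℕ} (h : I ^ n ≤ P) : I ≤ P := by
  induction n with
  | zero =>
    rw [pow_zero, Ideal.one_eq_top, top_le_iff] at h
    exact absurd h hP.1
  | succ n ih =>
    rw [pow_succ] at h
    exact (hP.2.2 _ _ (hI.pow hleib n) hI h).elim ih id

theorem exists_le_of_prod_le {ι : Type*} {s : Finset ι} {f : ι → Ideal R}
    (hf : ∀ i ∈ s, IsPoissonIdeal B (f i)) (h : ∏ i ∈ s, f i ≤ P) : ∃ i ∈ s, f i ≤ P := by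
  classical
  induction s using Finset.induction_on with
  | empty =>
    rw [Finset.prod_empty, Ideal.one_eq_top, top_le_iff] at h
    exact absurd h hP.1
  | insert i s hi ih =>
    rw [Finset.prod_insert hi] at h
    rcases hP.2.2 _ _ (hf i (s.mem_insert_self i))
      (IsPoissonIdeal.prod hleib fun j hj => hf j (Finset.mem_insert_of_mem hj)) h with hiP | hsP
    · exact ⟨i, s.mem_insert_self i, hiP⟩
    · obtain ⟨j, hj, hjP⟩ := ih (fun j hj => hf j (Finset.mem_insert_of_mem hj)) hsP
      exact ⟨j, Finset.mem_insert_of_mem hj, hjP⟩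

end IsPoissonPrime

end Poisson

theorem isPoissonPrime_iff_isPrime_general [CharZero k] [IsNoetherianRing R]
    (B : R →ₗ[k] R →ₗ[k] R)
    (hleib : ∀ a x y : R, B a (x * y) = B a x * y + x * B a y)
    (P : Ideal R) :
    IsPoissonPrime B P ↔ (P.IsPrime ∧ IsPoissonIdeal B P) := by
  refine ⟨fun hP => ⟨?_, hP.2.1⟩, fun hP => hP.1.isPoissonPrime hP.2⟩
  let : Algebra ℚ R := ((algebraMap k R).comp (algebraMap ℚ k)).toAlgebra
  set F := (P.finite_minimalPrimes_of_isNoetherianRing R).toFinset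
  have hF : ∀ Q ∈ F, Q ∈ P.minimalPrimes := fun Q hQ => by simpa [F] using hQ
  have hFpois : ∀ Q ∈ F, IsPoissonIdeal B Q := fun Q hQ =>
    hP.2.1.of_mem_minimalPrimes hleib (hF Q hQ)
  obtain ⟨n, hn⟩ := Ideal.exists_pow_le_of_le_radical_of_fg
    (Ideal.prod_le_radical_of_minimalPrimes_subset (I := P) (s := F) (by simp [F]))
    (IsNoetherian.noetherian _)
  obtain ⟨Q, hQF, hQP⟩ := hP.exists_le_of_prod_le hleib hFpois
    (hP.le_of_pow_le hleib (IsPoissonIdeal.prod hleib hFpois) hn)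
  have hQ := hF Q hQF
  exact le_antisymm hQ.1.2 hQP ▸ hQ.1.1

/-- Over a field of characteristic zero, in a commutative noetherian Poisson algebra, the
Poisson-prime ideals are exactly the prime ideals that are Poisson ideals. -/
theorem isPoissonPrime_iff_isPrime [CharZero k] [IsNoetherianRing R]
    (B : R →ₗ[k] R →ₗ[k] R)
    (hanti : ∀ a b : R, B a b = - B b a)
    (hjac : ∀ a b c : R, B a (B b c) + B b (B c a) + B c (B a b) = 0)
    (hleib : ∀ a x y : R, B a (x * y) = B a x * y + x * B a y)
    (P : Ideal R) :
    IsPoissonPrime B P ↔ (P.IsPrime ∧ IsPoissonIdeal B P) :=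
  isPoissonPrime_iff_isPrime_general B hleib P
end

section
/- Let q ∈ k× be a non-root of unity over an algebraically closed field k, and A = O_q(k^2) the quantum plane. Then the prime ideals of A are exactly: ⟨0⟩, ⟨x⟩, ⟨y⟩, the ideals ⟨x, y−β⟩ for β ∈ k, and the ideals ⟨x−α, y⟩ for α ∈ k. -/
/-- The defining relation of the quantum plane: `x * y = q • (y * x)`. -/
inductive QPlaneRel (k : Type*) [CommRing k] (q : k) :
    FreeAlgebra k (Fin 2) → FreeAlgebra k (Fin 2) → Prop
  | rel : QPlaneRel k q (FreeAlgebra.ι k (0 : Fin 2) * FreeAlgebra.ι k (1 : Fin 2))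
      (algebraMap k _ q * (FreeAlgebra.ι k (1 : Fin 2) * FreeAlgebra.ι k (0 : Fin 2)))

/-- The quantum plane `O_q(k²) = k⟨x,y⟩/(xy - qyx)`. -/
abbrev QuantumPlane (k : Type*) [CommRing k] (q : k) := RingQuot (QPlaneRel k q)

/-- The generator `x` of the quantum plane. -/
noncomputable def qpX (k : Type*) [CommRing k] (q : k) : QuantumPlane k q :=
  RingQuot.mkAlgHom k (QPlaneRel k q) (FreeAlgebra.ι k (0 : Fin 2))

/-- The generator `y` of the quantum plane. -/
noncomputable def qpY (k : Type*) [CommRing k] (q : k) : QuantumPlane k q :=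
  RingQuot.mkAlgHom k (QPlaneRel k q) (FreeAlgebra.ι k (1 : Fin 2))

/-- A two-sided ideal `P` of a (possibly noncommutative) ring is prime if it is proper and
`xAy ⊆ P` implies `x ∈ P` or `y ∈ P`. -/
def TwoSidedIdeal.IsPrimeTS {A : Type*} [Ring A] (P : TwoSidedIdeal A) : Prop :=
  P ≠ ⊤ ∧ ∀ x y : A, (∀ r : A, x * r * y ∈ P) → x ∈ P ∨ y ∈ P

/-!
The monomials `y ^ i * x ^ j` form a `k`-basis of `A` (read off from the left regular
representation on their coordinates `(i, j)`), and the leading term of a product is the product of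
the leading terms, so `A` is a domain and `⟨0⟩` is prime. The other listed ideals are the kernels
of the surjections of `A` onto `k[y] = A/⟨x⟩`, `k[x] = A/⟨y⟩` and `k`.

Conversely, let `P` be prime. The generators are normal: `x * a = σ a * x` and `a * y = y * τ a`
for the automorphisms `σ : (x, y) ↦ (x, q y)` and `τ : (x, y) ↦ (q x, y)`. If `x ∈ P`, then `P`
is the preimage of a prime ideal of `k[y]`, which is `0` or `⟨y - β⟩` as `k` is algebraically
closed; likewise if `y ∈ P`. If neither lies in `P`, normality keeps every monomial out of `P`
and makes `P` stable under `σ` and `τ`. These act diagonally on the monomial basis with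
eigenvalue pairs `(q ^ i, q ^ j)`, pairwise distinct because `q` is not a root of unity, so `P`
is spanned by the monomials it contains, and `P = 0`.
-/

namespace TwoSidedIdeal

variable {R : Type*} [Ring R] {P : TwoSidedIdeal R}

theorem isPrimeTS_ker {S F : Type*} [Ring S] [NoZeroDivisors S] [Nontrivial S] [FunLike F R S]
    [RingHomClass F R S] (f : F) : (ker f).IsPrimeTS := by
  refine ⟨fun h => by simpa [mem_ker] using (one_mem_iff (ker f)).2 h, fun a b h => ?_⟩
  simpa only [mem_ker] using mul_eq_zero.1 (by simpa using (mem_ker f).1 (h 1))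

theorem isPrimeTS_bot [NoZeroDivisors R] [Nontrivial R] : (⊥ : TwoSidedIdeal R).IsPrimeTS :=
  (ker_eq_bot (RingHom.id R)).2 Function.injective_id ▸ isPrimeTS_ker (RingHom.id R)

theorem IsPrimeTS.mem_or_mem_of_mul_mem_left (hP : P.IsPrimeTS) {z w : R}
    (hz : ∀ r, ∃ s, z * r = s * z) (h : z * w ∈ P) : z ∈ P ∨ w ∈ P :=
  hP.2 z w fun r => by
    obtain ⟨s, hs⟩ := hz r
    rw [hs, mul_assoc]
    exact P.mul_mem_left _ _ h

theorem IsPrimeTS.mem_or_mem_of_mul_mem_right (hP : P.IsPrimeTS) {z w : R}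
    (hz : ∀ r, ∃ s, r * z = z * s) (h : w * z ∈ P) : w ∈ P ∨ z ∈ P :=
  hP.2 w z fun r => by
    obtain ⟨s, hs⟩ := hz r
    rw [mul_assoc, hs, ← mul_assoc]
    exact P.mul_mem_right _ _ h

end TwoSidedIdeal

open Polynomial in
theorem Ideal.IsPrime.eq_bot_or_eq_span_X_sub_C {k : Type*} [Field k] [IsAlgClosed k]
    {J : Ideal k[X]} (hJ : J.IsPrime) :
    J = ⊥ ∨ ∃ β, J = Ideal.span {X - C β} := by
  refine or_iff_not_imp_left.2 fun hne => ?_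
  have hg := Submodule.IsPrincipal.prime_generator_of_isPrime J hne
  obtain ⟨β, hβ⟩ := IsAlgClosed.exists_root _ (degree_pos_of_irreducible hg.irreducible).ne'
  refine ⟨β, ?_⟩
  rw [← Ideal.span_singleton_generator J, Ideal.span_singleton_eq_span_singleton]
  exact ((irreducible_X_sub_C β).associated_of_dvd hg.irreducible (dvd_iff_isRoot.2 hβ)).symm

open Polynomial in
theorem TwoSidedIdeal.IsPrimeTS.eq_ker_or_eq_ker_aeval_comp {k R : Type*} [Field k]
    [IsAlgClosed k] [Ring R] [Algebra k R] {P : TwoSidedIdeal R} (hP : P.IsPrimeTS)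
    {f : R →ₐ[k] k[X]} {s : k[X] →ₐ[k] R} (hfs : f.comp s = AlgHom.id k k[X])
    (hker : ker f ≤ P) : P = ker f ∨ ∃ β : k, P = ker ((aeval β).comp f) := by
  have hfs' : ∀ g, f (s g) = g := AlgHom.congr_fun hfs
  have hsub : ∀ a, a - s (f a) ∈ P := fun a => hker <| (mem_ker f).2 <| by simp [hfs']
  have hmem : ∀ a, a ∈ P ↔ s (f a) ∈ P := fun a =>
    ⟨fun ha => by simpa using P.sub_mem ha (hsub a),
      fun ha => by simpa using P.add_mem (hsub a) ha⟩
  let J : Ideal k[X] := (asIdeal P).comap s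
  have hJ : J.IsPrime := by
    refine Ideal.isPrime_iff.2 ⟨fun htop => hP.1 ?_, fun {g h} hgh => ?_⟩
    · have h1 : (1 : k[X]) ∈ J := (Ideal.eq_top_iff_one _).1 htop
      exact P.one_mem_iff.1 (by simpa [J, Ideal.mem_comap] using h1)
    · simp only [J, Ideal.mem_comap, mem_asIdeal, map_mul] at hgh ⊢
      refine hP.2 _ _ fun r => ?_
      have hr : s g * r * s h = s g * (r - s (f r)) * s h + s (g * h) * s (f r) := by
        rw [mul_sub, sub_mul, ← map_mul, ← map_mul, ← map_mul, mul_right_comm g h]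
        abel
      rw [hr, map_mul]
      exact P.add_mem (P.mul_mem_right _ _ (P.mul_mem_left _ _ (hsub r)))
        (P.mul_mem_right _ _ hgh)
  have hPJ : ∀ a, a ∈ P ↔ f a ∈ J := fun a => by simp [J, Ideal.mem_comap, hmem a]
  rcases hJ.eq_bot_or_eq_span_X_sub_C with hJ0 | ⟨β, hβ⟩
  · exact Or.inl <| TwoSidedIdeal.ext fun a => by rw [hPJ, hJ0, Ideal.mem_bot, mem_ker]
  · refine Or.inr ⟨β, TwoSidedIdeal.ext fun a => ?_⟩
    rw [hPJ, hβ, Ideal.mem_span_singleton, dvd_iff_isRoot, mem_ker, AlgHom.comp_apply,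
      coe_aeval_eq_eval, IsRoot.def]

namespace Module.Basis

theorem exists_mem_of_invariant_of_ne_bot {ι κ K V : Type*} [Field K] [AddCommGroup V]
    [Module K V] (b : Basis ι K V) (T : κ → V →ₗ[K] V) (w : κ → ι → K)
    (hT : ∀ t i, T t (b i) = w t i • b i) (hw : Function.Injective fun i t => w t i)
    {U : Submodule K V} (hU : ∀ t, ∀ a ∈ U, T t a ∈ U) (hne : U ≠ ⊥) :
    ∃ i, b i ∈ U := by
  have hrepr : ∀ t a i, b.repr (T t a) i = w t i * b.repr a i := fun t a i => by
    have : (b.coord i).comp (T t) = w t i • b.coord i := b.ext fun j => by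
      by_cases hij : j = i <;> simp [hT, hij]
    exact LinearMap.congr_fun this a
  obtain ⟨a, ⟨ha, ha0⟩, hmin⟩ := (measure fun a => (b.repr a).support.card).wf.has_min
    {a | a ∈ U ∧ a ≠ 0} (Submodule.exists_mem_ne_zero_of_ne_bot hne)
  obtain ⟨i, hi⟩ := Finsupp.support_nonempty_iff.2 (b.repr.map_ne_zero_iff.2 ha0)
  refine ⟨i, ?_⟩
  obtain ⟨j, hj, hji⟩ | hsingle :
      (∃ j ∈ (b.repr a).support, j ≠ i) ∨ (b.repr a).support = {i} := by
    by_contra! h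
    exact h.2 (Finset.eq_singleton_iff_unique_mem.2 ⟨hi, h.1⟩)
  · obtain ⟨t, ht⟩ : ∃ t, w t j ≠ w t i := by
      by_contra! h
      exact hji (hw (funext h))
    set d := T t a - w t i • a
    have hd : ∀ l, b.repr d l = (w t l - w t i) * b.repr a l := fun l => by
      simp [d, hrepr, sub_mul]
    have hd0 : d ≠ 0 := fun h0 => by
      simpa [h0, sub_eq_zero, ht, Finsupp.mem_support_iff.1 hj] using hd j
    refine (hmin d ⟨U.sub_mem (hU t a ha) (U.smul_mem _ ha), hd0⟩ ?_).elim
    refine Finset.card_lt_card ((Finset.ssubset_iff_of_subset fun l hl => ?_).2 ⟨i, hi, ?_⟩)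
    · simp only [Finsupp.mem_support_iff, hd] at hl ⊢
      exact right_ne_zero_of_mul hl
    · simp [hd]
  · have : a = b.repr a i • b i := by
      conv_lhs => rw [← b.linearCombination_repr a]
      rw [Finsupp.linearCombination_apply, Finsupp.sum, hsingle, Finset.sum_singleton]
    rw [← inv_smul_smul₀ (Finsupp.mem_support_iff.1 hi) (b i), ← this]
    exact U.smul_mem _ ha

end Module.Basis

theorem pow_injective_of_forall_pow_ne_one {K : Type*} [GroupWithZero K] {q : K} (hq0 : q ≠ 0)
    (hq : ∀ n : ℕ, 0 < n → q ^ n ≠ 1) : Function.Injective fun n : ℕ => q ^ n := by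
  have : ¬IsOfFinOrder (Units.mk0 q hq0) := fun h => by
    obtain ⟨n, hn, h⟩ := isOfFinOrder_iff_pow_eq_one.1 h
    exact hq n hn (by simpa [Units.ext_iff] using h)
  exact fun i j hij => injective_pow_iff_not_isOfFinOrder.2 this (Units.ext (by simpa using hij))

namespace QuantumPlane

open Finsupp TwoSidedIdeal

section CommRing

variable {k : Type*} [CommRing k] {q : k}

@[elab_as_elim]
theorem induction_on {motive : QuantumPlane k q → Prop} (a : QuantumPlane k q)
    (algebraMap : ∀ c : k, motive (algebraMap k _ c)) (qpX : motive (qpX k q))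
    (qpY : motive (qpY k q)) (add : ∀ a b, motive a → motive b → motive (a + b))
    (mul : ∀ a b, motive a → motive b → motive (a * b)) : motive a := by
  obtain ⟨b, rfl⟩ := RingQuot.mkAlgHom_surjective k (QPlaneRel k q) a
  induction b using FreeAlgebra.induction with
  | grade0 c => rw [AlgHom.commutes]; exact algebraMap c
  | grade1 i => fin_cases i; exacts [qpX, qpY]
  | mul a b ha hb => rw [map_mul]; exact mul _ _ ha hb
  | add a b ha hb => rw [map_add]; exact add _ _ ha hb

theorem algHom_ext {B : Type*} [Semiring B] [Algebra k B] {f g : QuantumPlane k q →ₐ[k] B}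
    (hx : f (qpX k q) = g (qpX k q)) (hy : f (qpY k q) = g (qpY k q)) : f = g :=
  RingQuot.ringQuot_ext' _ _ _ <| FreeAlgebra.hom_ext <| funext fun i => by
    fin_cases i; exacts [hx, hy]

noncomputable def lift {B : Type*} [Semiring B] [Algebra k B] (u v : B)
    (h : u * v = algebraMap k B q * (v * u)) : QuantumPlane k q →ₐ[k] B :=
  RingQuot.liftAlgHom k ⟨FreeAlgebra.lift k ![u, v], by
    rintro _ _ ⟨⟩
    simpa using h⟩

section lift

variable {B : Type*} [Semiring B] [Algebra k B] {u v : B}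
  {h : u * v = algebraMap k B q * (v * u)}

@[simp] theorem lift_qpX : lift u v h (qpX k q) = u := by
  simp [lift, qpX, RingQuot.liftAlgHom_mkAlgHom_apply]

@[simp] theorem lift_qpY : lift u v h (qpY k q) = v := by
  simp [lift, qpY, RingQuot.liftAlgHom_mkAlgHom_apply]

end lift

theorem qpX_mul_qpY : qpX k q * qpY k q = q • (qpY k q * qpX k q) := by
  simpa [qpX, qpY, Algebra.smul_def] using
    RingQuot.mkAlgHom_rel k (QPlaneRel.rel (k := k) (q := q))

noncomputable def scale (s t : k) : QuantumPlane k q →ₐ[k] QuantumPlane k q :=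
  lift (s • qpX k q) (t • qpY k q) (by
    rw [smul_mul_smul_comm, smul_mul_smul_comm, qpX_mul_qpY, ← Algebra.smul_def, smul_smul,
      smul_smul, mul_comm t s, mul_comm q])

@[simp] theorem scale_qpX (s t : k) : scale s t (qpX k q) = s • qpX k q := lift_qpX

@[simp] theorem scale_qpY (s t : k) : scale s t (qpY k q) = t • qpY k q := lift_qpY

theorem scale_one_one : scale 1 1 = AlgHom.id k (QuantumPlane k q) :=
  algHom_ext (by simp) (by simp)

theorem scale_scale (s t s' t' : k) (a : QuantumPlane k q) :
    scale s t (scale s' t' a) = scale (s * s') (t * t') a := by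
  rw [← AlgHom.comp_apply]
  congr 1
  exact algHom_ext (by simp [smul_smul, mul_comm]) (by simp [smul_smul, mul_comm])

theorem qpX_mul (a : QuantumPlane k q) : qpX k q * a = scale 1 q a * qpX k q := by
  induction a using induction_on with
  | algebraMap c => rw [AlgHom.commutes, Algebra.commutes]
  | qpX => simp
  | qpY => rw [qpX_mul_qpY, scale_qpY, smul_mul_assoc]
  | add a b ha hb => rw [mul_add, ha, hb, map_add, add_mul]
  | mul a b ha hb => rw [← mul_assoc, ha, mul_assoc, hb, ← mul_assoc, map_mul]

theorem mul_qpY (a : QuantumPlane k q) : a * qpY k q = qpY k q * scale q 1 a := by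
  induction a using induction_on with
  | algebraMap c => rw [AlgHom.commutes, Algebra.commutes]
  | qpX => rw [qpX_mul_qpY, scale_qpX, mul_smul_comm]
  | qpY => simp
  | add a b ha hb => rw [add_mul, ha, hb, map_add, mul_add]
  | mul a b ha hb => rw [mul_assoc, hb, ← mul_assoc, ha, mul_assoc, map_mul]

theorem qpX_pow_mul (j : ℕ) (a : QuantumPlane k q) :
    qpX k q ^ j * a = scale 1 (q ^ j) a * qpX k q ^ j := by
  induction j generalizing a with
  | zero => simp [scale_one_one]
  | succ j ih =>
    rw [pow_succ, mul_assoc, qpX_mul, ← mul_assoc, ih, scale_scale, mul_assoc, ← pow_succ,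
      one_mul, ← pow_succ]

noncomputable def monomial (q : k) (i j : ℕ) : QuantumPlane k q := qpY k q ^ i * qpX k q ^ j

theorem monomial_mul_monomial (i j i' j' : ℕ) :
    monomial q i j * monomial q i' j' = q ^ (j * i') • monomial q (i + i') (j + j') := by
  rw [monomial, monomial, monomial, mul_assoc, ← mul_assoc (qpX k q ^ j), qpX_pow_mul, map_pow,
    scale_qpY, smul_pow, ← pow_mul, smul_mul_assoc, smul_mul_assoc, mul_smul_comm]
  simp only [pow_add, mul_assoc]

/-- Left multiplication by `x` in the coordinates `(i, j)` of the monomials `y ^ i * x ^ j`. -/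
noncomputable def xAction (q : k) : Module.End k (ℕ × ℕ →₀ k) :=
  linearCombination k fun p => single (p.1, p.2 + 1) (q ^ p.1)

noncomputable def yAction : Module.End k (ℕ × ℕ →₀ k) :=
  linearCombination k fun p => single (p.1 + 1, p.2) 1

theorem xAction_mul_yAction :
    xAction q * yAction =
      algebraMap k (Module.End k (ℕ × ℕ →₀ k)) q * (yAction * xAction q) := by
  refine lhom_ext fun p c => ?_
  simp only [Module.End.mul_apply, Module.algebraMap_end_apply, xAction, yAction,
    linearCombination_single, smul_single, smul_eq_mul, mul_one]
  ring_nf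

noncomputable def leftRegular (q : k) :
    QuantumPlane k q →ₐ[k] Module.End k (ℕ × ℕ →₀ k) :=
  lift (xAction q) yAction xAction_mul_yAction

theorem leftRegular_monomial (i j : ℕ) :
    leftRegular q (monomial q i j) (single (0, 0) 1) = single (i, j) 1 := by
  have hx : ∀ j, leftRegular q (qpX k q ^ j) (single (0, 0) 1) = single (0, j) 1 := by
    intro j
    induction j with
    | zero => simp
    | succ j ih =>
      rw [pow_succ', map_mul, Module.End.mul_apply, ih, leftRegular, lift_qpX]
      simp [xAction]
  have hy : ∀ i j, leftRegular q (qpY k q ^ i) (single (0, j) 1) = single (i, j) 1 := by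
    intro i j
    induction i with
    | zero => simp
    | succ i ih =>
      rw [pow_succ', map_mul, Module.End.mul_apply, ih, leftRegular, lift_qpY]
      simp [yAction]
  rw [monomial, map_mul, Module.End.mul_apply, hx, hy]

theorem linearIndependent_monomial :
    LinearIndependent k fun p : ℕ × ℕ => monomial q p.1 p.2 := by
  refine LinearIndependent.of_comp ((LinearMap.applyₗ (single (0, 0) 1)).comp
    (leftRegular q).toLinearMap) ?_
  simpa [Function.comp_def, leftRegular_monomial] using linearIndependent_single_one k (ℕ × ℕ)

theorem span_monomial :
    Submodule.span k (Set.range fun p : ℕ × ℕ => monomial q p.1 p.2) = ⊤ := by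
  set S := Submodule.span k (Set.range fun p : ℕ × ℕ => monomial q p.1 p.2)
  have hmono : ∀ i j, monomial q i j ∈ S := fun i j => Submodule.subset_span ⟨(i, j), rfl⟩
  have hmul : ∀ a ∈ S, ∀ b ∈ S, a * b ∈ S := fun a ha b hb => by
    have hab := Submodule.mul_mem_mul ha hb
    rw [Submodule.span_mul_span] at hab
    refine Submodule.span_le.2 ?_ hab
    rintro _ ⟨_, ⟨p, rfl⟩, _, ⟨p', rfl⟩, rfl⟩
    dsimp only
    rw [SetLike.mem_coe, monomial_mul_monomial]
    exact S.smul_mem _ (hmono _ _)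
  refine Submodule.eq_top_iff'.2 fun a => ?_
  induction a using induction_on with
  | algebraMap c =>
    simpa [Algebra.algebraMap_eq_smul_one, monomial] using S.smul_mem c (hmono 0 0)
  | qpX => simpa [monomial] using hmono 0 1
  | qpY => simpa [monomial] using hmono 1 0
  | add a b ha hb => exact S.add_mem ha hb
  | mul a b ha hb => exact hmul a ha b hb

noncomputable def basisMonomials (q : k) : Module.Basis (ℕ × ℕ) k (QuantumPlane k q) :=
  .mk linearIndependent_monomial span_monomial.ge

@[simp] theorem basisMonomials_apply (p : ℕ × ℕ) : basisMonomials q p = monomial q p.1 p.2 :=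
  Module.Basis.mk_apply _ _ p

theorem scale_monomial (s t : k) (i j : ℕ) :
    scale s t (monomial q i j) = (t ^ i * s ^ j) • monomial q i j := by
  simp [monomial, _root_.smul_pow, smul_smul, mul_comm]

theorem basisMonomials_mul (p p' : ℕ × ℕ) :
    basisMonomials q p * basisMonomials q p' =
      q ^ (p.2 * p'.1) • basisMonomials q (p + p') := by
  simp [monomial_mul_monomial]

theorem repr_mul_add_of_uniqueAdd {a b : QuantumPlane k q} {m n : ℕ × ℕ}
    (hm : m ∈ ((basisMonomials q).repr a).support)
    (hn : n ∈ ((basisMonomials q).repr b).support)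
    (h : UniqueAdd ((basisMonomials q).repr a).support ((basisMonomials q).repr b).support m n) :
    (basisMonomials q).repr (a * b) (m + n) =
      (basisMonomials q).repr a m * (basisMonomials q).repr b n * q ^ (m.2 * n.1) := by
  have hterm : ∀ p u, (basisMonomials q).repr
      ((basisMonomials q).repr a p • basisMonomials q p *
        (basisMonomials q).repr b u • basisMonomials q u) =
      single (p + u)
        ((basisMonomials q).repr a p * (basisMonomials q).repr b u * q ^ (p.2 * u.1)) :=
    fun p u => by
      rw [smul_mul_smul_comm, basisMonomials_mul, smul_smul, map_smul, Module.Basis.repr_self,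
        smul_single, smul_eq_mul, mul_one]
  conv_lhs => rw [← (basisMonomials q).linearCombination_repr a,
    ← (basisMonomials q).linearCombination_repr b]
  rw [linearCombination_apply, linearCombination_apply, Finsupp.sum, Finsupp.sum,
    Finset.sum_mul_sum, ← Finset.sum_product', map_sum, Finset.sum_apply',
    Finset.sum_eq_single (m, n)]
  · simp only [hterm, single_eq_same]
  · rintro ⟨p, u⟩ hpu hne
    rw [Finset.mem_product] at hpu
    have : p + u ≠ m + n := fun he => hne (Prod.ext_iff.2 (h hpu.1 hpu.2 he))
    simp only [hterm, single_apply, this, if_false]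
  · exact fun hmn => absurd (Finset.mem_product.2 ⟨hm, hn⟩) hmn

theorem noZeroDivisors [IsDomain k] (hq0 : q ≠ 0) : NoZeroDivisors (QuantumPlane k q) := by
  refine ⟨fun {a b} hab => ?_⟩
  by_contra! h
  have hsupp : ∀ c : QuantumPlane k q, c ≠ 0 → ((basisMonomials q).repr c).support.Nonempty :=
    fun c hc => support_nonempty_iff.2 ((basisMonomials q).repr.map_ne_zero_iff.2 hc)
  obtain ⟨m, hm, n, hn, huniq⟩ := UniqueSums.uniqueAdd_of_nonempty (hsupp a h.1) (hsupp b h.2)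
  have := repr_mul_add_of_uniqueAdd hm hn huniq
  rw [hab, map_zero, Finsupp.coe_zero, Pi.zero_apply] at this
  exact mul_ne_zero (mul_ne_zero (mem_support_iff.1 hm) (mem_support_iff.1 hn))
    (pow_ne_zero _ hq0) this.symm

noncomputable def killX (q : k) : QuantumPlane k q →ₐ[k] Polynomial k :=
  lift 0 Polynomial.X (by simp)

noncomputable def killY (q : k) : QuantumPlane k q →ₐ[k] Polynomial k :=
  lift Polynomial.X 0 (by simp)

instance [Nontrivial k] : Nontrivial (QuantumPlane k q) :=
  (killY q).toRingHom.domain_nontrivial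

theorem span_eq_ker {B : Type*} [Semiring B] [Algebra k B] (f : QuantumPlane k q →ₐ[k] B)
    (s : B →ₐ[k] QuantumPlane k q) {G : Set (QuantumPlane k q)} (hG : ∀ g ∈ G, f g = 0)
    (hx : qpX k q - s (f (qpX k q)) ∈ span G) (hy : qpY k q - s (f (qpY k q)) ∈ span G) :
    span G = ker f := by
  have key : ∀ a, a - s (f a) ∈ span G := fun a => by
    induction a using induction_on with
    | algebraMap c => simp
    | qpX => exact hx
    | qpY => exact hy
    | add a b ha hb => simpa [add_sub_add_comm] using add_mem ha hb
    | mul a b ha hb =>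
      have : a * b - s (f (a * b)) = a * (b - s (f b)) + (a - s (f a)) * s (f b) := by
        rw [map_mul, map_mul, mul_sub, sub_mul, sub_add_sub_cancel]
      rw [this]
      exact add_mem ((span G).mul_mem_left _ _ hb) ((span G).mul_mem_right _ _ ha)
  refine le_antisymm (span_le.2 fun g hg => (mem_ker f).2 (hG g hg)) fun a ha => ?_
  simpa [(mem_ker f).1 ha] using key a

open Polynomial

theorem killX_comp_aeval_qpY : (killX q).comp (aeval (qpY k q)) = AlgHom.id k k[X] :=
  Polynomial.algHom_ext (by simp [killX])

theorem killY_comp_aeval_qpX : (killY q).comp (aeval (qpX k q)) = AlgHom.id k k[X] :=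
  Polynomial.algHom_ext (by simp [killY])

theorem span_qpX_eq_ker : span {qpX k q} = ker (killX q) :=
  span_eq_ker _ (aeval (qpY k q)) (by simp [killX])
    (by simp only [killX, lift_qpX, map_zero, sub_zero]; exact subset_span rfl) (by simp [killX])

theorem span_qpY_eq_ker : span {qpY k q} = ker (killY q) :=
  span_eq_ker _ (aeval (qpX k q)) (by simp [killY]) (by simp [killY])
    (by simp only [killY, lift_qpY, map_zero, sub_zero]; exact subset_span rfl)

theorem span_qpX_qpY_sub_eq_ker (β : k) :
    span {qpX k q, qpY k q - algebraMap k _ β} = ker ((aeval β).comp (killX q)) :=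
  span_eq_ker _ (Algebra.ofId k _) (by simp [killX])
    (by simp only [killX, AlgHom.comp_apply, lift_qpX, map_zero, sub_zero]
        exact subset_span (by simp))
    (by simp only [killX, AlgHom.comp_apply, lift_qpY, aeval_X, Algebra.ofId_apply]
        exact subset_span (by simp))

theorem span_qpX_sub_qpY_eq_ker (α : k) :
    span {qpX k q - algebraMap k _ α, qpY k q} = ker ((aeval α).comp (killY q)) :=
  span_eq_ker _ (Algebra.ofId k _) (by simp [killY])
    (by simp only [killY, AlgHom.comp_apply, lift_qpX, aeval_X, Algebra.ofId_apply]
        exact subset_span (by simp))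
    (by simp only [killY, AlgHom.comp_apply, lift_qpY, map_zero, sub_zero]
        exact subset_span (by simp))

end CommRing

section Field

variable {k : Type*} [Field k] {q : k}

theorem exists_mul_qpX_eq (hq0 : q ≠ 0) (r : QuantumPlane k q) :
    ∃ s, r * qpX k q = qpX k q * s :=
  ⟨scale 1 q⁻¹ r, by rw [qpX_mul, scale_scale, one_mul, mul_inv_cancel₀ hq0, scale_one_one,
    AlgHom.id_apply]⟩

theorem exists_qpY_mul_eq (hq0 : q ≠ 0) (r : QuantumPlane k q) :
    ∃ s, qpY k q * r = s * qpY k q :=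
  ⟨scale q⁻¹ 1 r, by rw [mul_qpY, scale_scale, one_mul, mul_inv_cancel₀ hq0, scale_one_one,
    AlgHom.id_apply]⟩

variable {P : TwoSidedIdeal (QuantumPlane k q)}

theorem monomial_notMem (hq0 : q ≠ 0) (hP : P.IsPrimeTS) (hx : qpX k q ∉ P) (hy : qpY k q ∉ P)
    (i j : ℕ) : monomial q i j ∉ P := by
  intro h
  induction j with
  | succ j ih =>
    rw [monomial, pow_succ, ← mul_assoc] at h
    exact (hP.mem_or_mem_of_mul_mem_right (exists_mul_qpX_eq hq0) h).elim ih hx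
  | zero =>
    induction i with
    | zero => exact hP.1 (P.one_mem_iff.1 (by simpa [monomial] using h))
    | succ i ih =>
      rw [monomial, pow_succ', mul_assoc] at h
      exact (hP.mem_or_mem_of_mul_mem_left (exists_qpY_mul_eq hq0) h).elim hy ih

theorem eq_bot_of_qpX_notMem_of_qpY_notMem (hq0 : q ≠ 0) (hq : ∀ n : ℕ, 0 < n → q ^ n ≠ 1)
    (hP : P.IsPrimeTS) (hx : qpX k q ∉ P) (hy : qpY k q ∉ P) : P = ⊥ := by
  have hinj := pow_injective_of_forall_pow_ne_one hq0 hq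
  have hxa : ∀ a ∈ P, scale 1 q a ∈ P := fun a ha => by
    have h := P.mul_mem_left (qpX k q) a ha
    rw [qpX_mul] at h
    exact (hP.mem_or_mem_of_mul_mem_right (exists_mul_qpX_eq hq0) h).resolve_right hx
  have hay : ∀ a ∈ P, scale q 1 a ∈ P := fun a ha => by
    have h := P.mul_mem_right a (qpY k q) ha
    rw [mul_qpY] at h
    exact (hP.mem_or_mem_of_mul_mem_left (exists_qpY_mul_eq hq0) h).resolve_left hy
  refine eq_bot_iff.2 fun a ha => (mem_bot _).2 (by_contra fun ha0 => ?_)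
  obtain ⟨p, hp⟩ := (basisMonomials q).exists_mem_of_invariant_of_ne_bot
    (fun t => (![scale 1 q, scale q 1] t).toLinearMap) ![fun p => q ^ p.1, fun p => q ^ p.2]
    (by simp [Fin.forall_fin_two, scale_monomial])
    (fun p p' h => Prod.ext (hinj (by simpa using congrFun h 0))
      (hinj (by simpa using congrFun h 1)))
    (U := (asIdeal P).restrictScalars k) (by simpa [Fin.forall_fin_two] using ⟨hxa, hay⟩)
    ((Submodule.ne_bot_iff _).2 ⟨a, ha, ha0⟩)
  exact monomial_notMem hq0 hP hx hy p.1 p.2 (by simpa using hp)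

variable [IsAlgClosed k]

theorem eq_span_qpX_or_of_qpX_mem (hP : P.IsPrimeTS) (hx : qpX k q ∈ P) :
    P = span {qpX k q} ∨ ∃ β : k, P = span {qpX k q, qpY k q - algebraMap k _ β} := by
  simp_rw [span_qpX_eq_ker, span_qpX_qpY_sub_eq_ker]
  exact hP.eq_ker_or_eq_ker_aeval_comp killX_comp_aeval_qpY
    (span_qpX_eq_ker (q := q) ▸ span_le.2 (Set.singleton_subset_iff.2 hx))

theorem eq_span_qpY_or_of_qpY_mem (hP : P.IsPrimeTS) (hy : qpY k q ∈ P) :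
    P = span {qpY k q} ∨ ∃ α : k, P = span {qpX k q - algebraMap k _ α, qpY k q} := by
  simp_rw [span_qpY_eq_ker, span_qpX_sub_qpY_eq_ker]
  exact hP.eq_ker_or_eq_ker_aeval_comp killY_comp_aeval_qpX
    (span_qpY_eq_ker (q := q) ▸ span_le.2 (Set.singleton_subset_iff.2 hy))

end Field

end QuantumPlane

open QuantumPlane TwoSidedIdeal

/-- For `q` not a root of unity over an algebraically closed field, the prime (two-sided)
ideals of the quantum plane are exactly `⟨0⟩`, `⟨x⟩`, `⟨y⟩`, `⟨x, y - β⟩` for `β ∈ k`,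
and `⟨x - α, y⟩` for `α ∈ k`. -/
theorem quantumPlane_prime_spectrum {k : Type*} [Field k] [IsAlgClosed k] (q : k)
    (hq0 : q ≠ 0) (hq : ∀ n : ℕ, 0 < n → q ^ n ≠ 1) (P : TwoSidedIdeal (QuantumPlane k q)) :
    P.IsPrimeTS ↔
      P = ⊥ ∨
      P = TwoSidedIdeal.span {qpX k q} ∨
      P = TwoSidedIdeal.span {qpY k q} ∨
      (∃ β : k, P = TwoSidedIdeal.span
        {qpX k q, qpY k q - algebraMap k (QuantumPlane k q) β}) ∨
      (∃ α : k, P = TwoSidedIdeal.span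
        {qpX k q - algebraMap k (QuantumPlane k q) α, qpY k q}) := by
  constructor
  · intro hP
    by_cases hx : qpX k q ∈ P
    · rcases eq_span_qpX_or_of_qpX_mem hP hx with h | h
      exacts [Or.inr (Or.inl h), Or.inr (Or.inr (Or.inr (Or.inl h)))]
    by_cases hy : qpY k q ∈ P
    · rcases eq_span_qpY_or_of_qpY_mem hP hy with h | h
      exacts [Or.inr (Or.inr (Or.inl h)), Or.inr (Or.inr (Or.inr (Or.inr h)))]
    exact Or.inl (eq_bot_of_qpX_notMem_of_qpY_notMem hq0 hq hP hx hy)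
  · have := QuantumPlane.noZeroDivisors hq0
    rintro (rfl | rfl | rfl | ⟨β, rfl⟩ | ⟨α, rfl⟩)
    · exact isPrimeTS_bot
    · rw [span_qpX_eq_ker]; exact isPrimeTS_ker _
    · rw [span_qpY_eq_ker]; exact isPrimeTS_ker _
    · rw [span_qpX_qpY_sub_eq_ker β]; exact isPrimeTS_ker _
    · rw [span_qpX_sub_qpY_eq_ker α]; exact isPrimeTS_ker _
end
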